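/- arXiv:2210.05007 — 4 statements merged into one kernel-verified Lean document; each statement's English description precedes it below -/
import Mathlib

section
/- Let ξ > 0, let M ≥ 1 be an integer, and let E satisfy 0 ≤ E ≤ (1+ξ)/(1+3ξ). Then the minimum of f_{M,ξ}(p) over all vectors p = (p_0, …, p_M) ∈ ℝ^{M+1} satisfying p_n ≥ 0 for all n, ∑_{n=0}^{M} p_n = 1, and ∑_{n=0}^{M} n·p_n ≤ E, is attained at the unique point given by p_0 = 1−E, p_1 = E, and p_n = 0 for all n ∈ {2, …, M}. -/
open Finset

/-- The objective function `f_{M,ξ}` of the unidirectional teleportation optimization: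
`f_{M,ξ}(p) = (1/(1+ξ)) [ (∑_{n=0}^{M} p_n/(1+ξ)^n)^2 + (∑_{n=1}^{M} p_n ξ/(1+ξ)^n)^2 ]`. -/
noncomputable def fUni (M : ℕ) (ξ : ℝ) (p : Fin (M + 1) → ℝ) : ℝ :=
  (1 / (1 + ξ)) *
    ((∑ n : Fin (M + 1), p n / (1 + ξ) ^ (n : ℕ)) ^ 2 +
      (∑ n : Fin (M + 1), if 1 ≤ (n : ℕ) then p n * ξ / (1 + ξ) ^ (n : ℕ) else 0) ^ 2)

/-- Feasibility: `p_n ≥ 0`, `∑ p_n = 1`, `∑ n p_n ≤ E`. -/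
def FeasibleUni (M : ℕ) (E : ℝ) (p : Fin (M + 1) → ℝ) : Prop :=
  (∀ n, 0 ≤ p n) ∧ (∑ n, p n = 1) ∧ (∑ n : Fin (M + 1), ((n : ℕ) : ℝ) * p n ≤ E)

/-- The candidate optimal point: `p_0 = 1 - E`, `p_1 = E`, `p_n = 0` for `n ≥ 2`. -/
noncomputable def optUni (M : ℕ) (E : ℝ) : Fin (M + 1) → ℝ :=
  fun n => if (n : ℕ) = 0 then 1 - E else if (n : ℕ) = 1 then E else 0

/-!
Write `a = ∑ p_n (1+ξ)^{-n}` and `b = ∑_{n ≥ 1} p_n ξ (1+ξ)^{-n}`, so that `f = (a² + b²)/(1+ξ)`,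
and let `(a*, b*) = (1 - c, c)`, `c = ξE/(1+ξ)`, be the values at the candidate optimum.
Since `a² + b² ≥ a*² + b*²` as soon as `a* a + b* b ≥ a*² + b*²` (with equality only at
`(a, b) = (a*, b*)`), it suffices to minimise the linear functional `a* a + b* b = ∑ p_n w_n`,
where `w_0 = 1 - c` and `w_n = (1 - c + cξ) (1+ξ)^{-n}` for `n ≥ 1`. By Bernoulli's inequality the weights lie
above the line through `(0, w_0)` and `(1, w_1)` as soon as they do at `n = 2`, which is the
condition `E ≤ (1+ξ)/(1+3ξ)`; hence `∑ p_n w_n ≥ w_0 - (w_0 - w_1) ∑ n p_n ≥ w_0 - (w_0 - w_1) E`,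
the value at the optimum. At equality, `b = ξ (a - p_0)` gives `p_0 = 1 - E`, and then
`∑_{n ≥ 2} p_n ((1+ξ)^{-1} - (1+ξ)^{-n}) = 0` forces `p_n = 0` for `n ≥ 2`.
-/

theorem sq_add_sq_le_of_sq_add_sq_le_mul_add_mul {a b x y : ℝ}
    (h : a ^ 2 + b ^ 2 ≤ a * x + b * y) : a ^ 2 + b ^ 2 ≤ x ^ 2 + y ^ 2 := by
  nlinarith [sq_nonneg (x - a), sq_nonneg (y - b)]

theorem eq_and_eq_of_sq_add_sq_le_mul_add_mul {a b x y : ℝ}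
    (h : a ^ 2 + b ^ 2 ≤ a * x + b * y) (heq : x ^ 2 + y ^ 2 = a ^ 2 + b ^ 2) :
    x = a ∧ y = b := by
  have : (x - a) ^ 2 + (y - b) ^ 2 ≤ 0 := by nlinarith
  constructor <;> nlinarith [sq_nonneg (x - a), sq_nonneg (y - b)]

theorem sub_mul_le_sum_mul_of_sub_mul_le {ι : Type*} [Fintype ι] {p w ν : ι → ℝ} {α d E : ℝ}
    (hp0 : ∀ i, 0 ≤ p i) (hp1 : ∑ i, p i = 1) (hν : ∑ i, ν i * p i ≤ E) (hd : 0 ≤ d)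
    (hw : ∀ i, α - d * ν i ≤ w i) : α - d * E ≤ ∑ i, p i * w i :=
  calc α - d * E ≤ α * ∑ i, p i - d * ∑ i, ν i * p i := by rw [hp1, mul_one]; gcongr
    _ = ∑ i, p i * (α - d * ν i) := by
      rw [mul_sum, mul_sum, ← sum_sub_distrib]
      exact sum_congr rfl fun i _ => by ring
    _ ≤ ∑ i, p i * w i := sum_le_sum fun i _ => mul_le_mul_of_nonneg_left (hw i) (hp0 i)

theorem mul_sub_nat_mul_le_mul_pow_succ {K t d : ℝ} (hK : 0 ≤ K) (ht : 0 ≤ t)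
    (hd : K * t * (1 - t) ≤ d) (m : ℕ) : K * t - m * d ≤ K * t ^ (m + 1) :=
  calc K * t - m * d ≤ K * t * (1 + m * (t - 1)) := by
        nlinarith [mul_le_mul_of_nonneg_left hd m.cast_nonneg]
    _ ≤ K * t * t ^ m := by
        gcongr
        exact one_add_mul_sub_le_pow (by linarith) m
    _ = K * t ^ (m + 1) := by ring

noncomputable def uniA (M : ℕ) (ξ : ℝ) (p : Fin (M + 1) → ℝ) : ℝ :=
  ∑ n : Fin (M + 1), p n / (1 + ξ) ^ (n : ℕ)

noncomputable def uniB (M : ℕ) (ξ : ℝ) (p : Fin (M + 1) → ℝ) : ℝ :=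
  ∑ n : Fin (M + 1), if 1 ≤ (n : ℕ) then p n * ξ / (1 + ξ) ^ (n : ℕ) else 0

section
variable {M : ℕ} {ξ E : ℝ} {p : Fin (M + 1) → ℝ}

theorem fUni_eq_uniA_uniB : fUni M ξ p = 1 / (1 + ξ) * (uniA M ξ p ^ 2 + uniB M ξ p ^ 2) := rfl

theorem uniA_eq_sum_mul : uniA M ξ p = ∑ n, p n * (1 + ξ)⁻¹ ^ (n : ℕ) := by
  simp only [uniA, div_eq_mul_inv, inv_pow]

theorem uniB_eq_sum_mul :
    uniB M ξ p = ∑ n, p n * if 1 ≤ (n : ℕ) then ξ * (1 + ξ)⁻¹ ^ (n : ℕ) else 0 := by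
  refine sum_congr rfl fun n _ => ?_
  split_ifs <;> simp only [div_eq_mul_inv, inv_pow, mul_zero, mul_assoc]

theorem uniB_eq_mul_uniA_sub : uniB M ξ p = ξ * (uniA M ξ p - p 0) := by
  simp only [uniB, uniA, Fin.sum_univ_succ]
  simp [div_eq_mul_inv, mul_sum, mul_assoc, mul_left_comm]

theorem sum_optUni_mul (hM : 1 ≤ M) (g : ℕ → ℝ) :
    ∑ n : Fin (M + 1), optUni M E n * g n = (1 - E) * g 0 + E * g 1 := by
  obtain ⟨m, rfl⟩ : ∃ m, M = m + 1 := ⟨M - 1, by omega⟩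
  simp [Fin.sum_univ_succ, optUni]

theorem feasibleUni_optUni (hM : 1 ≤ M) (hE0 : 0 ≤ E) (hE1 : E ≤ 1) :
    FeasibleUni M E (optUni M E) := by
  refine ⟨fun n => ?_, ?_, ?_⟩
  · unfold optUni; split_ifs <;> linarith
  · simpa using sum_optUni_mul (E := E) hM fun _ => 1
  · exact le_of_eq (by simpa [mul_comm] using sum_optUni_mul (E := E) hM fun n => n)

theorem uniA_optUni (hM : 1 ≤ M) (hξ : 1 + ξ ≠ 0) :
    uniA M ξ (optUni M E) = 1 - ξ * E / (1 + ξ) := by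
  rw [uniA_eq_sum_mul, sum_optUni_mul hM fun n => (1 + ξ)⁻¹ ^ n]
  field_simp
  ring

theorem uniB_optUni (hM : 1 ≤ M) :
    uniB M ξ (optUni M E) = ξ * E / (1 + ξ) := by
  rw [uniB_eq_sum_mul, sum_optUni_mul hM fun n => if 1 ≤ n then ξ * (1 + ξ)⁻¹ ^ n else 0]
  simp only [nonpos_iff_eq_zero, one_ne_zero, ↓reduceIte, mul_zero, Std.le_refl, pow_one, zero_add]
  ring

theorem uniA_optUni_sq_add_uniB_optUni_sq_le (hξ : 0 < ξ) (hM : 1 ≤ M) (hE0 : 0 ≤ E)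
    (hE : E ≤ (1 + ξ) / (1 + 3 * ξ)) (hp : FeasibleUni M E p) :
    uniA M ξ (optUni M E) ^ 2 + uniB M ξ (optUni M E) ^ 2 ≤
      uniA M ξ (optUni M E) * uniA M ξ p + uniB M ξ (optUni M E) * uniB M ξ p := by
  obtain ⟨hp0, hp1, hpE⟩ := hp
  have hE' : E * (1 + 3 * ξ) ≤ 1 + ξ := (le_div_iff₀ (by positivity)).mp hE
  rw [uniA_optUni hM (by positivity), uniB_optUni hM, uniA_eq_sum_mul, uniB_eq_sum_mul,
    mul_sum, mul_sum, ← sum_add_distrib]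
  set t := (1 + ξ)⁻¹ with ht
  set c := ξ * E / (1 + ξ) with hc
  set K := 1 - c + c * ξ with hK
  set d := 1 - c - K * t with hd
  have ht0 : 0 ≤ t := by positivity
  have ht1 : t ≤ 1 := inv_le_one_of_one_le₀ (by linarith)
  have hK0 : 0 ≤ K := by
    rw [hK, hc]; field_simp; nlinarith
  have hdK : K * t * (1 - t) ≤ d := by
    have hslack : 0 ≤ 1 + ξ - E * (1 + 3 * ξ) := by linarith
    have hdiff : d - K * t * (1 - t) = ξ ^ 2 * (1 + ξ - E * (1 + 3 * ξ)) * t ^ 3 := by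
      rw [hd, hK, hc, ht]; field_simp; ring
    linarith [mul_nonneg (mul_nonneg (sq_nonneg ξ) hslack) (pow_nonneg ht0 3)]
  have hw : ∀ n : ℕ, (1 - c) - d * n ≤ (1 - c) * t ^ n + c * if 1 ≤ n then ξ * t ^ n else 0 := by
    intro n
    cases n with
    | zero => simp
    | succ m =>
      have := mul_sub_nat_mul_le_mul_pow_succ hK0 ht0 hdK m
      simp only [le_add_iff_nonneg_left, zero_le, if_true]
      push_cast
      linarith
  have hd0 : 0 ≤ d := hdK.trans' (mul_nonneg (mul_nonneg hK0 ht0) (sub_nonneg.mpr ht1))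
  calc (1 - c) ^ 2 + c ^ 2 = (1 - c) - d * E := by
        rw [hd, hK, hc, ht]; field_simp; ring
    _ ≤ ∑ n, p n * ((1 - c) * t ^ (n : ℕ) + c * if 1 ≤ (n : ℕ) then ξ * t ^ (n : ℕ) else 0) :=
        sub_mul_le_sum_mul_of_sub_mul_le hp0 hp1 hpE hd0 fun n => hw n
    _ = _ := sum_congr rfl fun n _ => by ring

theorem eq_optUni_of_uniA_eq_of_uniB_eq (hξ : 0 < ξ) (hM : 1 ≤ M) (hp : FeasibleUni M E p)
    (ha : uniA M ξ p = uniA M ξ (optUni M E)) (hb : uniB M ξ p = uniB M ξ (optUni M E)) :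
    p = optUni M E := by
  obtain ⟨hp0, hp1, -⟩ := hp
  rw [uniA_optUni hM (by positivity)] at ha
  rw [uniB_optUni hM, uniB_eq_mul_uniA_sub, ha] at hb
  have hc : ξ * E / (1 + ξ) * (1 + ξ) = ξ * E := div_mul_cancel₀ _ (by positivity)
  have h0 : p 0 = 1 - E := by
    have : ξ * (1 - E - p 0) = 0 := by linear_combination hb + hc
    linarith [(mul_eq_zero.mp this).resolve_left hξ.ne']
  obtain ⟨m, rfl⟩ : ∃ m, M = m + 1 := ⟨M - 1, by omega⟩
  rw [uniA_eq_sum_mul] at ha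
  set t := (1 + ξ)⁻¹
  have ht0 : 0 < t := by positivity
  have ht1 : t < 1 := inv_lt_one_of_one_lt₀ (by linarith)
  have htξ : t * (1 + ξ) = 1 := inv_mul_cancel₀ (by positivity)
  simp only [Fin.sum_univ_succ, Fin.val_zero, Fin.val_succ, pow_zero, mul_one, Fin.succ_zero_eq_one,
    zero_add, pow_one] at ha hp1
  have hgap : ∀ j : Fin m, 0 < t - t ^ ((j : ℕ) + 1 + 1) := fun j =>
    sub_pos.mpr (by simpa using pow_lt_pow_right_of_lt_one₀ ht0 ht1 (by omega : 1 < (j : ℕ) + 1 + 1))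
  have htail : ∑ j : Fin m, p j.succ.succ * (t - t ^ ((j : ℕ) + 1 + 1)) = 0 := by
    simp only [mul_sub, sum_sub_distrib, ← sum_mul]
    linear_combination t * hp1 - ha - (t - 1) * h0 + E * htξ
  have hzero : ∀ j : Fin m, p j.succ.succ = 0 := fun j =>
    (mul_eq_zero.mp ((sum_eq_zero_iff_of_nonneg fun i _ => mul_nonneg (hp0 _) (hgap i).le).mp
      htail j (mem_univ _))).resolve_right (hgap j).ne'
  have h1 : p 1 = E := by
    simp only [hzero, sum_const_zero, add_zero] at hp1
    linarith
  funext n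
  refine Fin.cases ?_ (Fin.cases ?_ fun j => ?_) n
  · simp [optUni, h0]
  · simp [optUni, h1]
  · simp [optUni, hzero]

end

theorem unidirectional_optimal_ineq_constraint (ξ E : ℝ) (M : ℕ) (hξ : 0 < ξ)
    (hM : 1 ≤ M) (hE0 : 0 ≤ E) (hE : E ≤ (1 + ξ) / (1 + 3 * ξ)) :
    FeasibleUni M E (optUni M E) ∧
      ∀ p : Fin (M + 1) → ℝ, FeasibleUni M E p →
        fUni M ξ (optUni M E) ≤ fUni M ξ p ∧
          (fUni M ξ p = fUni M ξ (optUni M E) → p = optUni M E) := by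
  have hE1 : E ≤ 1 := hE.trans ((div_le_one (by positivity)).mpr (by linarith))
  refine ⟨feasibleUni_optUni hM hE0 hE1, fun p hp => ?_⟩
  have htangent := uniA_optUni_sq_add_uniB_optUni_sq_le hξ hM hE0 hE hp
  have hscale : (0 : ℝ) < 1 / (1 + ξ) := by positivity
  rw [fUni_eq_uniA_uniB, fUni_eq_uniA_uniB]
  refine ⟨mul_le_mul_of_nonneg_left
    (sq_add_sq_le_of_sq_add_sq_le_mul_add_mul htangent) hscale.le, fun heq => ?_⟩
  obtain ⟨ha, hb⟩ :=
    eq_and_eq_of_sq_add_sq_le_mul_add_mul htangent (mul_left_cancel₀ hscale.ne' heq)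
  exact eq_optUni_of_uniA_eq_of_uniB_eq hξ hM hp ha hb
end

section
/- For every integer α ≥ 2 and every η ∈ (0, 1), one has 2α(1−η) − (1−η^α) > 0 and [α(1−η) − (1−η^α)] / ( (1−η) [2α(1−η) − (1−η^α)] ) ≥ 1/(3−η); that is, the value of the expression [α(1−η) − (1−η^α)] / ( (1−η) [2α(1−η) − (1−η^α)] ) at any integer α ≥ 2 is bounded below by its value at α = 2, which equals 1/(3−η). -/
lemma key_ineq (η : ℝ) (h0 : 0 < η) (h1 : η < 1) :
    ∀ α : ℕ, 2 ≤ α → 2 * (1 - η ^ α) ≤ (α : ℝ) * (1 - η ^ 2) := by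
  intro α hα
  induction α with
  | zero => omega
  | succ n ih =>
    rcases Nat.lt_or_ge n 2 with hn | hn
    · interval_cases n
      · omega
      · norm_num
    · have this1 := ih hn
      have hη1 : 0 < 1 - η := by linarith
      have hpn : η ^ n ≤ η :=
        calc η ^ n ≤ η ^ 1 := pow_le_pow_of_le_one h0.le h1.le (by omega)
        _ = η := pow_one η
      have h2 : 2 * η ^ n * (1 - η) ≤ (1 + η) * (1 - η) := by nlinarith
      have h3 : η ^ (n + 1) = η ^ n * η := by ring
      push_cast
      nlinarith [pow_pos h0 n]

theorem ratio_bounded_below_by_value_at_two (η : ℝ) (hη : η ∈ Set.Ioo (0 : ℝ) 1)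
    (α : ℕ) (hα : 2 ≤ α) :
    0 < 2 * (α : ℝ) * (1 - η) - (1 - η ^ α) ∧
    1 / (3 - η) ≤
      ((α : ℝ) * (1 - η) - (1 - η ^ α)) /
        ((1 - η) * (2 * (α : ℝ) * (1 - η) - (1 - η ^ α))) ∧
    ((2 : ℝ) * (1 - η) - (1 - η ^ 2)) /
        ((1 - η) * (2 * 2 * (1 - η) - (1 - η ^ 2))) = 1 / (3 - η) := by
  obtain ⟨h0, h1⟩ := hη
  have key := key_ineq η h0 h1 α hα
  have hαR : (2 : ℝ) ≤ (α : ℝ) := by exact_mod_cast hα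
  have hη1 : 0 < 1 - η := by linarith
  have h3η : (0 : ℝ) < 3 - η := by linarith
  have hprod : 0 < (α : ℝ) * (1 - η) * (3 - η) :=
    mul_pos (mul_pos (by linarith) hη1) h3η
  have hpos : 0 < 2 * (α : ℝ) * (1 - η) - (1 - η ^ α) := by nlinarith
  refine ⟨hpos, ?_, ?_⟩
  · rw [div_le_div_iff₀ (by linarith) (by positivity)]
    nlinarith
  · rw [div_eq_div_iff (by nlinarith [mul_pos (mul_pos hη1 hη1) h3η]) (by linarith)]
    ring
end

section
/- Let η ∈ (0, 1), let m, n, r, s be nonnegative integers with m+n ≥ 2 and r+s ≥ 2, and write α = r+s, β = m+n. Then Γ_{m,n,r,s,η} ≥ (1−η)^2 [ αβ(1−η^{α−1})(1−η^{β−1}) + ( α − (1−η^α)/(1−η) ) ( β − (1−η^β)/(1−η) ) ]. -/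
open Finset

/-- `T_η^{ab} = ∑_{k=0}^{min(a,b)} C(a,k) C(b,k) (1−η)^{2k} η^{a+b−2k}`. -/
noncomputable def Tcoef (η : ℝ) (a b : ℕ) : ℝ :=
  ∑ k ∈ Finset.range (min a b + 1),
    (a.choose k : ℝ) * (b.choose k : ℝ) * (1 - η) ^ (2 * k) * η ^ (a + b - 2 * k)

/-- The coefficient `Γ_{m,n,r,s,η}` from the bidirectional teleportation optimization. -/
noncomputable def Gamma (η : ℝ) (m n r s : ℕ) : ℝ :=
  (1 - η) ^ 2 *
      (2 * ((m : ℝ) + n) * ((r : ℝ) + s) -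
        ((1 - η ^ (r + s)) / (1 - η)) * ((m : ℝ) + n) -
        ((1 - η ^ (m + n)) / (1 - η)) * ((r : ℝ) + s)) +
    1 - η ^ (m + n) - η ^ (r + s) + Tcoef η m r * Tcoef η n s -
    (1 - η) ^ 2 *
      ((s : ℝ) * ((m : ℝ) + n) * η ^ (r + s - 1) +
        (n : ℝ) * ((r : ℝ) + s) * η ^ (m + n - 1))

lemma Tcoef_nonneg {η : ℝ} (hη0 : 0 ≤ η) (hη1 : η ≤ 1) (a b : ℕ) :
    0 ≤ Tcoef η a b := by
  have h1 : (0:ℝ) ≤ 1 - η := by linarith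
  refine Finset.sum_nonneg fun k _ => ?_
  positivity

lemma Tcoef_lb {η : ℝ} (hη0 : 0 ≤ η) (hη1 : η ≤ 1) (a b : ℕ) :
    η ^ (a + b) + (a : ℝ) * (b : ℝ) * (1 - η) ^ 2 * η ^ (a + b - 2) ≤ Tcoef η a b := by
  have h1 : (0:ℝ) ≤ 1 - η := by linarith
  rcases Nat.eq_zero_or_pos a with ha | ha
  · subst ha; simp [Tcoef]
  rcases Nat.eq_zero_or_pos b with hb | hb
  · subst hb; simp [Tcoef]
  have hmin : 2 ≤ min a b + 1 := by omega
  have hsub : Finset.range 2 ⊆ Finset.range (min a b + 1) := by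
    apply Finset.range_subset_range.2 hmin
  have hsum : (∑ k ∈ Finset.range 2,
      (a.choose k : ℝ) * (b.choose k : ℝ) * (1 - η) ^ (2 * k) * η ^ (a + b - 2 * k))
      = η ^ (a + b) + (a : ℝ) * (b : ℝ) * (1 - η) ^ 2 * η ^ (a + b - 2) := by
    simp [Finset.sum_range_succ, Nat.choose_one_right]
  rw [← hsum]
  exact Finset.sum_le_sum_of_subset_of_nonneg hsub (fun k _ _ => by positivity)

set_option maxHeartbeats 2000000 in
theorem Gamma_lower_bound (η : ℝ) (hη : η ∈ Set.Ioo (0 : ℝ) 1)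
    (m n r s : ℕ) (hmn : 2 ≤ m + n) (hrs : 2 ≤ r + s) :
    (1 - η) ^ 2 *
        (((r : ℝ) + s) * ((m : ℝ) + n) * (1 - η ^ (r + s - 1)) * (1 - η ^ (m + n - 1)) +
          (((r : ℝ) + s) - (1 - η ^ (r + s)) / (1 - η)) *
            (((m : ℝ) + n) - (1 - η ^ (m + n)) / (1 - η))) ≤
      Gamma η m n r s := by
  obtain ⟨hη0, hη1⟩ := hη
  have hη0' : (0:ℝ) ≤ η := hη0.le
  have hη1' : η ≤ 1 := hη1.le
  have hne : (1:ℝ) - η ≠ 0 := by linarith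
  obtain ⟨a, ha⟩ : ∃ a, r + s = a + 2 := ⟨r + s - 2, by omega⟩
  obtain ⟨b, hb⟩ : ∃ b, m + n = b + 2 := ⟨m + n - 2, by omega⟩
  -- key product lower bound
  have lb1 := Tcoef_lb hη0' hη1' m r
  have lb2 := Tcoef_lb hη0' hη1' n s
  have pos1 : (0:ℝ) ≤ η ^ (m + r) + (m : ℝ) * (r : ℝ) * (1 - η) ^ 2 * η ^ (m + r - 2) := by
    have : (0:ℝ) ≤ 1 - η := by linarith
    positivity
  have pos2 : (0:ℝ) ≤ η ^ (n + s) + (n : ℝ) * (s : ℝ) * (1 - η) ^ 2 * η ^ (n + s - 2) := by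
    have : (0:ℝ) ≤ 1 - η := by linarith
    positivity
  have hprod : (η ^ (m + r) + (m : ℝ) * (r : ℝ) * (1 - η) ^ 2 * η ^ (m + r - 2)) *
      (η ^ (n + s) + (n : ℝ) * (s : ℝ) * (1 - η) ^ 2 * η ^ (n + s - 2)) ≤
      Tcoef η m r * Tcoef η n s :=
    mul_le_mul lb1 lb2 pos2 (Tcoef_nonneg hη0' hη1' m r)
  -- rewrite exponents
  have e1 : η ^ (m + r) * η ^ (n + s) = η ^ (a + b + 4) := by
    rw [← pow_add]; congr 1; omega
  have e2 : (m : ℝ) * (r : ℝ) * (1 - η) ^ 2 * η ^ (m + r - 2) * η ^ (n + s)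
      = (m : ℝ) * (r : ℝ) * (1 - η) ^ 2 * η ^ (a + b + 2) := by
    rcases Nat.eq_zero_or_pos m with h | hm
    · simp [h]
    rcases Nat.eq_zero_or_pos r with h | hr
    · simp [h]
    have h2 : m + r - 2 + (n + s) = a + b + 2 := by omega
    rw [mul_assoc _ (η ^ (m + r - 2)), ← pow_add, h2]
  have e3 : η ^ (m + r) * ((n : ℝ) * (s : ℝ) * (1 - η) ^ 2 * η ^ (n + s - 2))
      = (n : ℝ) * (s : ℝ) * (1 - η) ^ 2 * η ^ (a + b + 2) := by
    rcases Nat.eq_zero_or_pos n with h | hn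
    · simp [h]
    rcases Nat.eq_zero_or_pos s with h | hs
    · simp [h]
    have h2 : n + s - 2 + (m + r) = a + b + 2 := by omega
    rw [mul_comm (η ^ (m + r)), mul_assoc _ (η ^ (n + s - 2)), ← pow_add, h2]
  have quart : (0:ℝ) ≤ ((m : ℝ) * (r : ℝ) * (1 - η) ^ 2 * η ^ (m + r - 2)) *
      ((n : ℝ) * (s : ℝ) * (1 - η) ^ 2 * η ^ (n + s - 2)) := by
    have : (0:ℝ) ≤ 1 - η := by linarith
    positivity
  have key : η ^ (a + b + 4) + (1 - η) ^ 2 * ((m : ℝ) * r + (n : ℝ) * s) * η ^ (a + b + 2)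
      ≤ Tcoef η m r * Tcoef η n s := by
    nlinarith [hprod, e1, e2, e3, quart]
  -- monotonicity in powers
  have hq1 : η ^ (a + b + 2) ≤ η ^ (a + 1) :=
    pow_le_pow_of_le_one hη0' hη1' (by omega)
  have hq2 : η ^ (a + b + 2) ≤ η ^ (b + 1) :=
    pow_le_pow_of_le_one hη0' hη1' (by omega)
  have hc1 : (0:ℝ) ≤ (1 - η) ^ 2 * (((m : ℝ) + n) * r) := by positivity
  have hc2 : (0:ℝ) ≤ (1 - η) ^ 2 * (((r : ℝ) + s) * m) := by positivity
  have h1 := mul_le_mul_of_nonneg_left hq1 hc1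
  have h2 := mul_le_mul_of_nonneg_left hq2 hc2
  have h3 : (0:ℝ) ≤ (1 - η) ^ 2 * (2 * (m : ℝ) * r) * η ^ (a + b + 2) := by positivity
  rw [← sub_nonneg]
  have ident : Gamma η m n r s -
      (1 - η) ^ 2 *
        (((r : ℝ) + s) * ((m : ℝ) + n) * (1 - η ^ (r + s - 1)) * (1 - η ^ (m + n - 1)) +
          (((r : ℝ) + s) - (1 - η ^ (r + s)) / (1 - η)) *
            (((m : ℝ) + n) - (1 - η ^ (m + n)) / (1 - η)))
      = Tcoef η m r * Tcoef η n s - η ^ (a + b + 4) +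
        (1 - η) ^ 2 * ((((m : ℝ) + n) * r) * η ^ (a + 1) + (((r : ℝ) + s) * m) * η ^ (b + 1)
          - (((r : ℝ) + s) * ((m : ℝ) + n)) * η ^ (a + b + 2)) := by
    rw [Gamma, ha, hb]
    have ea : a + 2 - 1 = a + 1 := rfl
    have eb : b + 2 - 1 = b + 1 := rfl
    rw [ea, eb]
    have e4 : η ^ (a + 2) = η ^ a * η ^ 2 := by rw [← pow_add]
    have e5 : η ^ (b + 2) = η ^ b * η ^ 2 := by rw [← pow_add]
    have e6 : η ^ (a + 1) = η ^ a * η := by rw [← pow_succ]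
    have e7 : η ^ (b + 1) = η ^ b * η := by rw [← pow_succ]
    have e8 : η ^ (a + b + 4) = η ^ a * η ^ b * η ^ 4 := by rw [← pow_add, ← pow_add]
    have e9 : η ^ (a + b + 2) = η ^ a * η ^ b * η ^ 2 := by rw [← pow_add, ← pow_add]
    rw [e4, e5, e6, e7, e8, e9]
    field_simp
    ring
  rw [ident]
  nlinarith [key, h1, h2, h3]
end

section
/- Let ξ > 0 and let E satisfy 0 < 2E ≤ (1+ξ)/(2+3ξ). Then ( (1/(1+ξ)) [ 1 − 2(ξ/(1+ξ))E + 2(ξ/(1+ξ))^2 E^2 ] )^2 > (1/(1+ξ)^2) [ 1 − 4(ξ/(1+ξ))E + 6(ξ/(1+ξ))^2 E^2 ]; that is, the square of the unconstrained-direction optimal value (1/(1+ξ)) [ 1 − 2(ξ/(1+ξ))E + 2(ξ/(1+ξ))^2 E^2 ] strictly exceeds the bidirectional optimal value (1/(1+ξ)^2) [ 1 − 4(ξ/(1+ξ))E + 6(ξ/(1+ξ))^2 E^2 ]. -/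
theorem strict_submultiplicativity (ξ E : ℝ) (hξ : 0 < ξ) (hE0 : 0 < 2 * E)
    (hE : 2 * E ≤ (1 + ξ) / (2 + 3 * ξ)) :
    (1 / (1 + ξ) ^ 2) * (1 - 4 * (ξ / (1 + ξ)) * E + 6 * (ξ / (1 + ξ)) ^ 2 * E ^ 2) <
      ((1 / (1 + ξ)) * (1 - 2 * (ξ / (1 + ξ)) * E + 2 * (ξ / (1 + ξ)) ^ 2 * E ^ 2)) ^ 2 := by
  have h1 : (0:ℝ) < 1 + ξ := by linarith
  have h2 : (0:ℝ) < 2 + 3 * ξ := by linarith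
  have hE' : 2 * E * (2 + 3 * ξ) ≤ 1 + ξ := by
    rw [le_div_iff₀ h2] at hE; linarith
  set a := ξ / (1 + ξ) * E with ha
  have haE : a = ξ * E / (1 + ξ) := by rw [ha]; ring
  have hEpos : 0 < E := by linarith
  have ha_pos : 0 < a := by
    rw [haE]; positivity
  have ha_lt : a < 1/6 := by
    rw [haE, div_lt_iff₀ h1]
    nlinarith [mul_pos hξ hE0]
  have key : (1 - 2*a + 2*a^2)^2 - (1 - 4*a + 6*a^2) = 2*a^2*(1 - 4*a + 2*a^2) := by ring
  have hpos : 0 < 2*a^2*(1 - 4*a + 2*a^2) := by nlinarith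
  have goal' : (1 - 4*a + 6*a^2) < (1 - 2*a + 2*a^2)^2 := by nlinarith
  have hne : (1 + ξ) ≠ 0 := ne_of_gt h1
  have expand : ((1 / (1 + ξ)) * (1 - 2 * (ξ / (1 + ξ)) * E + 2 * (ξ / (1 + ξ)) ^ 2 * E ^ 2)) ^ 2
      = (1 / (1 + ξ)^2) * (1 - 2*a + 2*a^2)^2 := by
    rw [ha]; field_simp
  have expand2 : (1 / (1 + ξ) ^ 2) * (1 - 4 * (ξ / (1 + ξ)) * E + 6 * (ξ / (1 + ξ)) ^ 2 * E ^ 2)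
      = (1 / (1 + ξ)^2) * (1 - 4*a + 6*a^2) := by
    rw [ha]; field_simp
  rw [expand, expand2]
  apply mul_lt_mul_of_pos_left goal'
  positivity
end
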